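/- arXiv:1806.03072 — 7 statements merged into one kernel-verified Lean document; each statement's English description precedes it below -/
import Mathlib

section
/- The substitution ū = −u−v, v̄ = u, Ē(ū,v̄) = G(u,v), Ḡ(ū,v̄) = E(u,v) + G(u,v) − 2F(u,v), F̄(ū,v̄) = G(u,v) − F(u,v) maps solutions of the system 2EF_u − FE_u − EE_v = 0, 2GF_v − FG_v − GG_u = 0, GE_u + EG_v − 2F(F_u+F_v) + (3F−2G)E_v + (3F−2E)G_u = 0 to solutions of the same system. -/
noncomputable def pu (f : ℝ × ℝ → ℝ) (x : ℝ × ℝ) : ℝ := fderiv ℝ f x (1, 0)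

noncomputable def pv (f : ℝ × ℝ → ℝ) (x : ℝ × ℝ) : ℝ := fderiv ℝ f x (0, 1)

/-- `(E, F, G)` solves the hexagonal-geodesic-web quasilinear system on `U`. -/
def IsSol (E F G : ℝ × ℝ → ℝ) (U : Set (ℝ × ℝ)) : Prop :=
  ∀ x ∈ U,
    2 * E x * pu F x - F x * pu E x - E x * pv E x = 0 ∧
    2 * G x * pv F x - F x * pv G x - G x * pu G x = 0 ∧
    G x * pu E x + E x * pv G x - 2 * F x * (pu F x + pv F x)
      + (3 * F x - 2 * G x) * pv E x + (3 * F x - 2 * E x) * pu G x = 0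

/-- The linear substitution `σ (u,v) = (v, -u-v)` as a continuous linear map. -/
noncomputable def sigmaL : ℝ × ℝ →L[ℝ] ℝ × ℝ :=
  (ContinuousLinearMap.snd ℝ ℝ ℝ).prod
    (-(ContinuousLinearMap.fst ℝ ℝ ℝ) - ContinuousLinearMap.snd ℝ ℝ ℝ)

lemma sigmaL_apply (x : ℝ × ℝ) : sigmaL x = (x.2, -x.1 - x.2) := by
  simp [sigmaL, sub_eq_add_neg]

lemma comp_deriv (f : ℝ × ℝ → ℝ) (hf : ContDiff ℝ (⊤ : ℕ∞) f) (x w : ℝ × ℝ) :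
    fderiv ℝ (fun x : ℝ × ℝ => f (x.2, -x.1 - x.2)) x w
      = fderiv ℝ f (x.2, -x.1 - x.2) (w.2, -w.1 - w.2) := by
  have h1 : HasFDerivAt (⇑sigmaL) sigmaL x := sigmaL.hasFDerivAt
  have h2 : HasFDerivAt f (fderiv ℝ f (sigmaL x)) (sigmaL x) :=
    (hf.differentiable (by simp) (sigmaL x)).hasFDerivAt
  have h3 := h2.comp x h1
  have heq : (f ∘ ⇑sigmaL) = fun x : ℝ × ℝ => f (x.2, -x.1 - x.2) := by
    funext y; simp [Function.comp, sigmaL_apply]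
  rw [heq] at h3
  rw [h3.fderiv]
  simp [sigmaL_apply]

lemma comp_diff (f : ℝ × ℝ → ℝ) (hf : ContDiff ℝ (⊤ : ℕ∞) f) :
    Differentiable ℝ (fun x : ℝ × ℝ => f (x.2, -x.1 - x.2)) := by
  have : (fun x : ℝ × ℝ => f (x.2, -x.1 - x.2)) = f ∘ ⇑sigmaL := by
    funext y; simp [Function.comp, sigmaL_apply]
  rw [this]
  exact (hf.differentiable (by simp)).comp sigmaL.differentiable

lemma comp_pu (f : ℝ × ℝ → ℝ) (hf : ContDiff ℝ (⊤ : ℕ∞) f) (x : ℝ × ℝ) :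
    pu (fun x : ℝ × ℝ => f (x.2, -x.1 - x.2)) x = -pv f (x.2, -x.1 - x.2) := by
  have := comp_deriv f hf x (1, 0)
  simp only [pu, pv, this]
  have : ((0 : ℝ), (-1 : ℝ) - 0) = -((0 : ℝ), (1 : ℝ)) := by norm_num
  rw [this, map_neg]

lemma comp_pv (f : ℝ × ℝ → ℝ) (hf : ContDiff ℝ (⊤ : ℕ∞) f) (x : ℝ × ℝ) :
    pv (fun x : ℝ × ℝ => f (x.2, -x.1 - x.2)) x
      = pu f (x.2, -x.1 - x.2) - pv f (x.2, -x.1 - x.2) := by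
  have := comp_deriv f hf x (0, 1)
  simp only [pu, pv, this]
  have : ((1 : ℝ), (-0 : ℝ) - 1) = ((1 : ℝ), (0 : ℝ)) - ((0 : ℝ), (1 : ℝ)) := by norm_num
  rw [this, map_sub]

/-- the substitution `ū = -u - v`, `v̄ = u`,
`Ē = G`, `Ḡ = E + G - 2F`, `F̄ = G - F` (i.e. `(u, v) = (v̄, -ū - v̄)`)
maps solutions of the hexagonal-web system to solutions. -/
theorem statement6 (U : Set (ℝ × ℝ)) (hU : IsOpen U)
    (E F G : ℝ × ℝ → ℝ)
    (hE : ContDiff ℝ (⊤ : ℕ∞) E) (hF : ContDiff ℝ (⊤ : ℕ∞) F) (hG : ContDiff ℝ (⊤ : ℕ∞) G)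
    (hsol : IsSol E F G U) :
    IsSol (fun x => G (x.2, -x.1 - x.2))
      (fun x => G (x.2, -x.1 - x.2) - F (x.2, -x.1 - x.2))
      (fun x => E (x.2, -x.1 - x.2) + G (x.2, -x.1 - x.2) - 2 * F (x.2, -x.1 - x.2))
      {x | (x.2, -x.1 - x.2) ∈ U} := by
  intro x hx
  set y : ℝ × ℝ := (x.2, -x.1 - x.2) with hy
  obtain ⟨h1, h2, h3⟩ := hsol y hx
  have dE := comp_diff E hE
  have dF := comp_diff F hF
  have dG := comp_diff G hG
  -- derivatives of the composed basic functions
  have puE := comp_pu E hE x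
  have pvE := comp_pv E hE x
  have puF := comp_pu F hF x
  have pvF := comp_pv F hF x
  have puG := comp_pu G hG x
  have pvG := comp_pv G hG x
  -- derivatives of the combinations
  have hFb_pu : pu (fun x : ℝ × ℝ => G (x.2, -x.1 - x.2) - F (x.2, -x.1 - x.2)) x
      = pu (fun x : ℝ × ℝ => G (x.2, -x.1 - x.2)) x
        - pu (fun x : ℝ × ℝ => F (x.2, -x.1 - x.2)) x := by
    simp only [pu, fderiv_fun_sub (dG x) (dF x)]; rfl
  have hFb_pv : pv (fun x : ℝ × ℝ => G (x.2, -x.1 - x.2) - F (x.2, -x.1 - x.2)) x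
      = pv (fun x : ℝ × ℝ => G (x.2, -x.1 - x.2)) x
        - pv (fun x : ℝ × ℝ => F (x.2, -x.1 - x.2)) x := by
    simp only [pv, fderiv_fun_sub (dG x) (dF x)]; rfl
  have hGb_pu : pu (fun x : ℝ × ℝ =>
        E (x.2, -x.1 - x.2) + G (x.2, -x.1 - x.2) - 2 * F (x.2, -x.1 - x.2)) x
      = pu (fun x : ℝ × ℝ => E (x.2, -x.1 - x.2)) x
        + pu (fun x : ℝ × ℝ => G (x.2, -x.1 - x.2)) x
        - 2 * pu (fun x : ℝ × ℝ => F (x.2, -x.1 - x.2)) x := by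
    simp only [pu, fderiv_fun_sub ((dE x).fun_add (dG x)) ((dF x).const_mul 2),
      fderiv_fun_add (dE x) (dG x), fderiv_const_mul (dF x) 2]
    rfl
  have hGb_pv : pv (fun x : ℝ × ℝ =>
        E (x.2, -x.1 - x.2) + G (x.2, -x.1 - x.2) - 2 * F (x.2, -x.1 - x.2)) x
      = pv (fun x : ℝ × ℝ => E (x.2, -x.1 - x.2)) x
        + pv (fun x : ℝ × ℝ => G (x.2, -x.1 - x.2)) x
        - 2 * pv (fun x : ℝ × ℝ => F (x.2, -x.1 - x.2)) x := by
    simp only [pv, fderiv_fun_sub ((dE x).fun_add (dG x)) ((dF x).const_mul 2),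
      fderiv_fun_add (dE x) (dG x), fderiv_const_mul (dF x) 2]
    rfl
  refine ⟨?_, ?_, ?_⟩
  all_goals simp only [hFb_pu, hFb_pv, hGb_pu, hGb_pv, puE, pvE, puF, pvF, puG, pvG]
  · linear_combination h2
  · linear_combination -h1 - h2 - h3
  · linear_combination h3
end

section
/- For any constant f₀ ≠ 0 and any smooth positive function h of one variable, the functions E(u,v) = h(v−u)², G(u,v) = h(v−u)², F(u,v) = f₀ h(v−u) − h(v−u)² satisfy the system 2EF_u − FE_u − EE_v = 0, 2GF_v − FG_v − GG_u = 0, GE_u + EG_v − 2F(F_u+F_v) + (3F−2G)E_v + (3F−2E)G_u = 0. -/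
lemma fd_comp (k : ℝ → ℝ) (hk : Differentiable ℝ k) (x : ℝ × ℝ) (a b : ℝ) :
    fderiv ℝ (fun x : ℝ × ℝ => k (x.2 - x.1)) x (a, b)
      = (b - a) * deriv k (x.2 - x.1) := by
  have hL : HasFDerivAt (fun x : ℝ × ℝ => x.2 - x.1)
      ((ContinuousLinearMap.snd ℝ ℝ ℝ) - (ContinuousLinearMap.fst ℝ ℝ ℝ)) x :=
    (hasFDerivAt_snd).sub (hasFDerivAt_fst)
  have hc := ((hk (x.2 - x.1)).hasDerivAt).comp_hasFDerivAt x hL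
  simp only [Function.comp_def] at hc
  rw [hc.fderiv]
  simp [mul_comm]

/-- for any constant `f₀ ≠ 0` and smooth positive `h`, the translation
invariant triple `E = h(v-u)²`, `G = h(v-u)²`, `F = f₀ h(v-u) - h(v-u)²` solves the
hexagonal-web system. -/
theorem statement7 (f₀ : ℝ) (hf₀ : f₀ ≠ 0) (h : ℝ → ℝ)
    (hh : ContDiff ℝ (⊤ : ℕ∞) h) (hpos : ∀ s, 0 < h s) :
    IsSol (fun x => h (x.2 - x.1) ^ 2)
      (fun x => f₀ * h (x.2 - x.1) - h (x.2 - x.1) ^ 2)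
      (fun x => h (x.2 - x.1) ^ 2) Set.univ := by
  have hd : Differentiable ℝ h := hh.differentiable (by simp)
  have hE : Differentiable ℝ (fun s : ℝ => h s ^ 2) := hd.pow 2
  have hF : Differentiable ℝ (fun s : ℝ => f₀ * h s - h s ^ 2) :=
    (hd.const_mul f₀).sub hE
  intro x _
  set s := x.2 - x.1 with hs
  have dE : deriv (fun s : ℝ => h s ^ 2) s = 2 * h s * deriv h s := by
    have : HasDerivAt (fun s : ℝ => h s ^ 2) _ s := ((hd s).hasDerivAt).pow 2
    simpa [mul_comm, mul_assoc, mul_left_comm] using this.deriv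
  have dF : deriv (fun s : ℝ => f₀ * h s - h s ^ 2) s
      = f₀ * deriv h s - 2 * h s * deriv h s := by
    have : HasDerivAt (fun s : ℝ => f₀ * h s - h s ^ 2) _ s := (((hd s).hasDerivAt).const_mul f₀).sub (((hd s).hasDerivAt).pow 2)
    simpa [mul_comm, mul_assoc, mul_left_comm] using this.deriv
  have puE : pu (fun x : ℝ × ℝ => h (x.2 - x.1) ^ 2) x = -(2 * h s * deriv h s) := by
    simpa [pu, (show deriv (fun s : ℝ => h s ^ 2) (x.2 - x.1) = 2 * h (x.2 - x.1) * deriv h (x.2 - x.1) from dE), hs] using fd_comp (fun s => h s ^ 2) hE x 1 0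
  have pvE : pv (fun x : ℝ × ℝ => h (x.2 - x.1) ^ 2) x = 2 * h s * deriv h s := by
    simpa [pv, (show deriv (fun s : ℝ => h s ^ 2) (x.2 - x.1) = 2 * h (x.2 - x.1) * deriv h (x.2 - x.1) from dE), hs] using fd_comp (fun s => h s ^ 2) hE x 0 1
  have puF : pu (fun x : ℝ × ℝ => f₀ * h (x.2 - x.1) - h (x.2 - x.1) ^ 2) x
      = -(f₀ * deriv h s - 2 * h s * deriv h s) := by
    simpa [pu, (show deriv (fun s : ℝ => f₀ * h s - h s ^ 2) (x.2 - x.1) = f₀ * deriv h (x.2 - x.1) - 2 * h (x.2 - x.1) * deriv h (x.2 - x.1) from dF), hs] using fd_comp (fun s => f₀ * h s - h s ^ 2) hF x 1 0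
  have pvF : pv (fun x : ℝ × ℝ => f₀ * h (x.2 - x.1) - h (x.2 - x.1) ^ 2) x
      = f₀ * deriv h s - 2 * h s * deriv h s := by
    simpa [pv, (show deriv (fun s : ℝ => f₀ * h s - h s ^ 2) (x.2 - x.1) = f₀ * deriv h (x.2 - x.1) - 2 * h (x.2 - x.1) * deriv h (x.2 - x.1) from dF), hs] using fd_comp (fun s => f₀ * h s - h s ^ 2) hF x 0 1
  refine ⟨?_, ?_, ?_⟩ <;> simp only [puE, pvE, puF, pvF] <;> ring
end

section
/- For k ≠ 0 and ε = ±1, every function y(z) satisfying k²(y − l)² − k z² = ε (implicitly, with y' obtained by implicit differentiation on an interval where the relation defines y smoothly with k(y−l) ≠ 0) is a solution of the ODE z³ y'' = ε (y')³. -/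
/-!
Write `u = k (y - l)`. Differentiating the conic `u² - k z² = ε` gives `u y' = z`, and
differentiating `y' = z / u` once more gives `y'' = (u² - k z²) / u³ = ε / u³`.
Hence `z³ y'' = ε (z / u)³ = ε y'³`.
-/

section ConicGeodesic

variable {k l ε : ℝ} {s : Set ℝ} {y : ℝ → ℝ}

theorem deriv_eq_div_of_conic (hs : IsOpen s) (hy : ∀ z ∈ s, DifferentiableAt ℝ y z)
    (himp : ∀ z ∈ s, k ^ 2 * (y z - l) ^ 2 - k * z ^ 2 = ε)
    (hreg : ∀ z ∈ s, k * (y z - l) ≠ 0) :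
    ∀ z ∈ s, deriv y z = z / (k * (y z - l)) := by
  intro z hz
  have hconic : HasDerivAt (fun w => k ^ 2 * (y w - l) ^ 2 - k * w ^ 2)
      (k ^ 2 * (2 * (y z - l) ^ 1 * deriv y z) - k * (2 * z ^ 1)) z :=
    ((((hy z hz).hasDerivAt.sub_const l).pow 2).const_mul (k ^ 2)).sub
      ((hasDerivAt_pow 2 z).const_mul k)
  have hlocal : (fun w => k ^ 2 * (y w - l) ^ 2 - k * w ^ 2) =ᶠ[nhds z] fun _ => ε :=
    Filter.eventually_of_mem (hs.mem_nhds hz) himp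
  have hzero : k ^ 2 * (2 * (y z - l) ^ 1 * deriv y z) - k * (2 * z ^ 1) = 0 := by
    rw [← hconic.deriv, hlocal.deriv_eq, deriv_const]
  have hu := hreg z hz
  have hk : k ≠ 0 := left_ne_zero_of_mul hu
  rw [eq_div_iff hu]
  apply mul_left_cancel₀ (mul_ne_zero two_ne_zero hk)
  linear_combination hzero

theorem deriv_deriv_eq_div_of_conic (hs : IsOpen s) (hy : ∀ z ∈ s, DifferentiableAt ℝ y z)
    (himp : ∀ z ∈ s, k ^ 2 * (y z - l) ^ 2 - k * z ^ 2 = ε)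
    (hreg : ∀ z ∈ s, k * (y z - l) ≠ 0) :
    ∀ z ∈ s, deriv (deriv y) z = ε / (k * (y z - l)) ^ 3 := by
  intro z hz
  have hu := hreg z hz
  have hslope : HasDerivAt (fun w => w / (k * (y w - l)))
      ((1 * (k * (y z - l)) - z * (k * deriv y z)) / (k * (y z - l)) ^ 2) z :=
    (hasDerivAt_id z).div (((hy z hz).hasDerivAt.sub_const l).const_mul k) hu
  have hlocal : deriv y =ᶠ[nhds z] fun w => w / (k * (y w - l)) :=
    Filter.eventually_of_mem (hs.mem_nhds hz) (deriv_eq_div_of_conic hs hy himp hreg)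
  rw [hlocal.deriv_eq, hslope.deriv, deriv_eq_div_of_conic hs hy himp hreg z hz,
    ← himp z hz]
  field_simp

end ConicGeodesic

theorem statement9_general (k l ε : ℝ)
    (s : Set ℝ) (hs : IsOpen s) (y : ℝ → ℝ) (hy : ContDiffOn ℝ 2 y s)
    (himp : ∀ z ∈ s, k ^ 2 * (y z - l) ^ 2 - k * z ^ 2 = ε)
    (hreg : ∀ z ∈ s, k * (y z - l) ≠ 0) :
    ∀ z ∈ s, z ^ 3 * deriv (deriv y) z = ε * (deriv y z) ^ 3 := by
  have hdiff : ∀ z ∈ s, DifferentiableAt ℝ y z := fun z hz =>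
    (hy.contDiffAt (hs.mem_nhds hz)).differentiableAt (by norm_num)
  intro z hz
  rw [deriv_deriv_eq_div_of_conic hs hdiff himp hreg z hz,
    deriv_eq_div_of_conic hs hdiff himp hreg z hz, div_pow]
  ring

/-- for `k ≠ 0` and `ε = ±1`, any smooth function `y(z)` implicitly
defined on an open set by `k²(y - l)² - k z² = ε`, with `k (y - l) ≠ 0`, solves the
ODE `z³ y'' = ε (y')³`. -/
theorem statement9 (k l ε : ℝ) (hk : k ≠ 0) (hε : ε = 1 ∨ ε = -1)
    (s : Set ℝ) (hs : IsOpen s) (y : ℝ → ℝ) (hy : ContDiffOn ℝ 2 y s)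
    (himp : ∀ z ∈ s, k ^ 2 * (y z - l) ^ 2 - k * z ^ 2 = ε)
    (hreg : ∀ z ∈ s, k * (y z - l) ≠ 0) :
    ∀ z ∈ s, z ^ 3 * deriv (deriv y) z = ε * (deriv y z) ^ 3 :=
  statement9_general k l ε s hs y hy himp hreg
end

section
/- The conic A y² + 2B y + C + D z² = 0 in the (z,y)-plane coincides with the curve k²(y − l)² − k z² = ε (for some k ≠ 0, l ∈ ℝ, ε = ±1 fixed) for some choice of k, l if and only if [A : B : C : D] lies on the quadric AC − B² + εD² = 0 in ℝℙ³ with D ≠ 0 and appropriate sign conditions; in particular, writing the conic from (k,l) as A = k², B = −k²l, C = k²l² − ε, D = −k, one always has AC − B² + εD² = 0. -/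
/-! Expanding `k²(y - l)² - k z² - ε` gives the conic with coordinates
`[k² : -k²l : k²l² - ε : -k]`, which satisfy the quadric equation identically. Conversely, a
point of the quadric with `A ≠ 0` and `D ≠ 0` is recovered by rescaling with `t = A / D²`:
then `k = -tD`, `l = -B / A`, and the remaining coordinate `C` is forced by the quadric. -/

section Geodesic

variable {R : Type*} [CommRing R]

theorem geodesic_coords_mem_quadric (ε k l : R) :
    k ^ 2 * (k ^ 2 * l ^ 2 - ε) - (-(k ^ 2) * l) ^ 2 + ε * (-k) ^ 2 = 0 := by
  ring

theorem geodesic_conic_eq_zero_iff (ε k l z y : R) :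
    k ^ 2 * y ^ 2 + 2 * (-(k ^ 2) * l) * y + (k ^ 2 * l ^ 2 - ε) + (-k) * z ^ 2 = 0
      ↔ k ^ 2 * (y - l) ^ 2 - k * z ^ 2 = ε := by
  rw [← sub_eq_zero (b := ε)]
  exact Eq.congr_left (by ring)

end Geodesic

theorem exists_geodesic_coords_of_mem_quadric {F : Type*} [Field F] {ε A B C D : F}
    (hq : A * C - B ^ 2 + ε * D ^ 2 = 0) (hD : D ≠ 0) (hA : A ≠ 0) :
    ∃ t k l : F, t ≠ 0 ∧ k ≠ 0 ∧
      t * A = k ^ 2 ∧ t * B = -(k ^ 2) * l ∧ t * C = k ^ 2 * l ^ 2 - ε ∧ t * D = -k := by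
  refine ⟨A / D ^ 2, -A / D, -B / A, by positivity, by simp [hA, hD], ?_, ?_, ?_, ?_⟩
  · field_simp
  · field_simp
  · field_simp
    linear_combination hq
  · field_simp

theorem statement11_general (ε : ℝ) :
    (∀ k l : ℝ, k ≠ 0 →
      (k ^ 2 * (k ^ 2 * l ^ 2 - ε) - (-(k ^ 2) * l) ^ 2 + ε * (-k) ^ 2 = 0 ∧
       ∀ z y : ℝ,
         (k ^ 2 * y ^ 2 + 2 * (-(k ^ 2) * l) * y + (k ^ 2 * l ^ 2 - ε) + (-k) * z ^ 2 = 0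
           ↔ k ^ 2 * (y - l) ^ 2 - k * z ^ 2 = ε))) ∧
    (∀ A B C D : ℝ, A * C - B ^ 2 + ε * D ^ 2 = 0 → D ≠ 0 → A ≠ 0 →
      ∃ t k l : ℝ, t ≠ 0 ∧ k ≠ 0 ∧
        t * A = k ^ 2 ∧ t * B = -(k ^ 2) * l ∧ t * C = k ^ 2 * l ^ 2 - ε ∧ t * D = -k) :=
  ⟨fun k l _ => ⟨geodesic_coords_mem_quadric ε k l, geodesic_conic_eq_zero_iff ε k l⟩,
    fun _ _ _ _ hq hD hA => exists_geodesic_coords_of_mem_quadric hq hD hA⟩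

/-- the conic `A y² + 2B y + C + D z² = 0` coincides with a curve
`k²(y - l)² - k z² = ε` exactly for homogeneous coordinates `[A : B : C : D]` on the
quadric `AC - B² + εD² = 0` with `D ≠ 0` (and the appropriate sign/nondegeneracy
condition `A ≠ 0`); in particular, the coordinates `A = k²`, `B = -k²l`,
`C = k²l² - ε`, `D = -k` obtained from `(k, l)` always satisfy `AC - B² + εD² = 0`. -/
theorem statement11 (ε : ℝ) (hε : ε = 1 ∨ ε = -1) :
    (∀ k l : ℝ, k ≠ 0 →
      (k ^ 2 * (k ^ 2 * l ^ 2 - ε) - (-(k ^ 2) * l) ^ 2 + ε * (-k) ^ 2 = 0 ∧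
       ∀ z y : ℝ,
         (k ^ 2 * y ^ 2 + 2 * (-(k ^ 2) * l) * y + (k ^ 2 * l ^ 2 - ε) + (-k) * z ^ 2 = 0
           ↔ k ^ 2 * (y - l) ^ 2 - k * z ^ 2 = ε))) ∧
    (∀ A B C D : ℝ, A * C - B ^ 2 + ε * D ^ 2 = 0 → D ≠ 0 → A ≠ 0 →
      ∃ t k l : ℝ, t ≠ 0 ∧ k ≠ 0 ∧
        t * A = k ^ 2 ∧ t * B = -(k ^ 2) * l ∧ t * C = k ^ 2 * l ^ 2 - ε ∧ t * D = -k) :=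
  statement11_general ε
end

section
/- Let P(z,y) be a smooth function with P ≠ 0 satisfying z³(P_z + P P_y) = ε P³. Then the curve z ↦ [A : B : C : 1] with A = −1/P² + ε/z², B = −z/P + y/P² − εy/z², C = −z² + 2zy/P − y²/P² + εy²/z² (evaluated along an integral curve (z, y(z)) of dy/dz = P) is constant in z; that is, each integral curve of ∂_z + P∂_y lies on a single conic of the family, and its dual point satisfies AC − B² + ε = 0. -/
noncomputable def pz (f : ℝ × ℝ → ℝ) (x : ℝ × ℝ) : ℝ := fderiv ℝ f x (1, 0)

noncomputable def py (f : ℝ × ℝ → ℝ) (x : ℝ × ℝ) : ℝ := fderiv ℝ f x (0, 1)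

private lemma const_of_Ioo {f : ℝ → ℝ} {a b : ℝ}
    (h : ∀ z ∈ Set.Ioo a b, HasDerivAt f 0 z) {x₁ x₂ : ℝ}
    (hx₁ : x₁ ∈ Set.Ioo a b) (hx₂ : x₂ ∈ Set.Ioo a b) : f x₁ = f x₂ := by
  apply (convex_Ioo a b).is_const_of_fderivWithin_eq_zero
    (fun z hz => (h z hz).differentiableAt.differentiableWithinAt) ?_ hx₁ hx₂
  intro z hz
  rw [fderivWithin_of_isOpen isOpen_Ioo hz]
  ext t
  simp [(h z hz).deriv, ← toSpanSingleton_deriv, (h z hz).differentiableAt.hasDerivAt.deriv]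

/-- if `P ≠ 0` satisfies `z³(P_z + P P_y) = ε P³`, then along any
integral curve `(z, y(z))` of `dy/dz = P` the dual point
`A = -1/P² + ε/z²`, `B = -z/P + y/P² - εy/z²`, `C = -z² + 2zy/P - y²/P² + εy²/z²`
is constant and satisfies `AC - B² + ε = 0`: each integral curve lies on a single
conic of the family. -/
theorem statement12 (ε : ℝ) (hε : ε = 1 ∨ ε = -1)
    (U : Set (ℝ × ℝ)) (hU : IsOpen U)
    (P : ℝ × ℝ → ℝ) (hP : ContDiff ℝ (⊤ : ℕ∞) P)
    (hPne : ∀ x ∈ U, P x ≠ 0)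
    (hPDE : ∀ x ∈ U, x.1 ^ 3 * (pz P x + P x * py P x) = ε * (P x) ^ 3)
    (a b : ℝ) (y : ℝ → ℝ) (hy : ContDiffOn ℝ 1 y (Set.Ioo a b))
    (hcurve : ∀ z ∈ Set.Ioo a b, (z, y z) ∈ U ∧ z ≠ 0 ∧ deriv y z = P (z, y z)) :
    ∃ A₀ B₀ C₀ : ℝ,
      A₀ * C₀ - B₀ ^ 2 + ε = 0 ∧
      ∀ z ∈ Set.Ioo a b,
        -1 / P (z, y z) ^ 2 + ε / z ^ 2 = A₀ ∧
        -z / P (z, y z) + y z / P (z, y z) ^ 2 - ε * y z / z ^ 2 = B₀ ∧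
        -z ^ 2 + 2 * z * y z / P (z, y z) - y z ^ 2 / P (z, y z) ^ 2
          + ε * y z ^ 2 / z ^ 2 = C₀ := by
  rcases Set.eq_empty_or_nonempty (Set.Ioo a b) with he | ⟨z₀, hz₀⟩
  · refine ⟨1, 0, -ε, by ring, fun z hz => ?_⟩
    rw [he] at hz; exact absurd hz (Set.notMem_empty z)
  set F₁ : ℝ → ℝ := fun t => -1 / P (t, y t) ^ 2 + ε / t ^ 2 with hF₁
  set F₂ : ℝ → ℝ := fun t => -t / P (t, y t) + y t / P (t, y t) ^ 2 - ε * y t / t ^ 2 with hF₂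
  set F₃ : ℝ → ℝ := fun t =>
    -t ^ 2 + 2 * t * y t / P (t, y t) - y t ^ 2 / P (t, y t) ^ 2 + ε * y t ^ 2 / t ^ 2 with hF₃
  have key : ∀ z ∈ Set.Ioo a b,
      HasDerivAt F₁ 0 z ∧ HasDerivAt F₂ 0 z ∧ HasDerivAt F₃ 0 z := by
    intro z hz
    obtain ⟨hmem, hzne, hdy⟩ := hcurve z hz
    have hqne : P (z, y z) ≠ 0 := hPne _ hmem
    have hyd : HasDerivAt y (deriv y z) z :=
      ((hy.differentiableOn one_ne_zero).differentiableAt (isOpen_Ioo.mem_nhds hz)).hasDerivAt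
    have hPd : HasFDerivAt P (fderiv ℝ P (z, y z)) (z, y z) :=
      (hP.differentiable (by simp) _).hasFDerivAt
    have hg : HasDerivAt (fun t => (t, y t)) ((1 : ℝ), deriv y z) z :=
      (hasDerivAt_id z).prodMk hyd
    have hQ : HasDerivAt (fun t => P (t, y t)) (fderiv ℝ P (z, y z) (1, deriv y z)) z :=
      hPd.comp_hasDerivAt z hg
    have hlin : fderiv ℝ P (z, y z) (1, deriv y z)
        = pz P (z, y z) + deriv y z * py P (z, y z) := by
      have h1 : ((1 : ℝ), deriv y z) = ((1 : ℝ), (0 : ℝ)) + deriv y z • ((0 : ℝ), (1 : ℝ)) := by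
        simp
      rw [h1, map_add, map_smul, pz, py]
      simp [mul_comm]
    have hq2 : P (z, y z) ^ 2 ≠ 0 := pow_ne_zero _ hqne
    have hz2 : z ^ 2 ≠ 0 := pow_ne_zero _ hzne
    have hz3 : z ^ 3 ≠ 0 := pow_ne_zero _ hzne
    have hrel : pz P (z, y z) + P (z, y z) * py P (z, y z)
        = ε * P (z, y z) ^ 3 / z ^ 3 := by
      have h := hPDE _ hmem
      field_simp
      linear_combination h
    have hQ' : HasDerivAt (fun t => P (t, y t)) (ε * P (z, y z) ^ 3 / z ^ 3) z := by
      rw [hlin, hdy, hrel] at hQ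
      exact hQ
    -- F₁
    have h1' : HasDerivAt F₁ 0 z := by
      have h := ((hasDerivAt_const z (-1 : ℝ)).div (hQ'.pow 2) hq2).add
        ((hasDerivAt_const z ε).div (hasDerivAt_pow 2 z) hz2)
      refine h.congr_deriv ?_
      simp only [Pi.pow_apply, Pi.neg_apply]
      field_simp
      ring
    -- F₂
    have h2' : HasDerivAt F₂ 0 z := by
      have h := (((hasDerivAt_id' z).neg.div hQ' hqne).add
          (hyd.div (hQ'.pow 2) hq2)).sub
        ((hyd.const_mul ε).div (hasDerivAt_pow 2 z) hz2)
      refine h.congr_deriv ?_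
      simp only [Pi.pow_apply, Pi.neg_apply]
      rw [hdy]
      field_simp
      ring
    -- F₃
    have h3' : HasDerivAt F₃ 0 z := by
      have hmul : HasDerivAt (fun t => 2 * t * y t)
          ((2 * 1) * y z + (2 * z) * deriv y z) z :=
        ((hasDerivAt_id' z).const_mul 2).mul hyd
      have h := (((hasDerivAt_pow 2 z).neg.add
          (hmul.div hQ' hqne)).sub
          ((hyd.pow 2).div (hQ'.pow 2) hq2)).add
          (((hyd.pow 2).const_mul ε).div (hasDerivAt_pow 2 z) hz2)
      refine h.congr_deriv ?_
      simp only [Pi.pow_apply, Pi.neg_apply]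
      rw [hdy]
      field_simp
      ring
    exact ⟨h1', h2', h3'⟩
  obtain ⟨hmem₀, hz₀ne, _⟩ := hcurve z₀ hz₀
  have hq₀ : P (z₀, y z₀) ≠ 0 := hPne _ hmem₀
  refine ⟨F₁ z₀, F₂ z₀, F₃ z₀, ?_, fun z hz => ?_⟩
  · rw [hF₁, hF₂, hF₃]
    field_simp
    ring
  · exact ⟨const_of_Ioo (fun t ht => (key t ht).1) hz hz₀,
      const_of_Ioo (fun t ht => (key t ht).2.1) hz hz₀,
      const_of_Ioo (fun t ht => (key t ht).2.2) hz hz₀⟩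
end

section
/- For ε = ±1 and ρ ∉ {1, −1/2}, suppose P is a smooth function of z alone satisfying z P' = ρP + εP³ with P never zero. Then the three direction fields with slopes P, −P, 0 form a geodesic 3-web of the ODE z y'' = ρ y' + ε(y')³ (i.e., each slope S ∈ {P, −P, 0} satisfies z(S_z + S S_y) = ρS + εS³), and the hexagonality condition P_yy + Q_yy + R_yy − (3ε/z)(PP_y + QQ_y + RR_y) + (1/z²)[P³ + Q³ + R³ + ε(ρ−1)(P + Q + R)] = 0 holds with Q = −P, R = 0. -/
/-- A slope `S(z,y)` defines a foliation by geodesics of `z y'' = ρ y' + ε (y')³`. -/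
def IsGeoSlope (ε ρ : ℝ) (S : ℝ × ℝ → ℝ) : Prop :=
  ∀ x : ℝ × ℝ, x.1 * (pz S x + S x * py S x) = ρ * S x + ε * (S x) ^ 3

lemma fderiv_comp_fst (g : ℝ → ℝ) (hg : Differentiable ℝ g) (x : ℝ × ℝ) (v : ℝ × ℝ) :
    fderiv ℝ (fun x' : ℝ × ℝ => g x'.1) x v = deriv g x.1 * v.1 := by
  have h := ((hg x.1).hasDerivAt).comp_hasFDerivAt x (hasFDerivAt_fst (𝕜 := ℝ) (p := x))
  have h' : HasFDerivAt (fun x' : ℝ × ℝ => g x'.1)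
      (deriv g x.1 • ContinuousLinearMap.fst ℝ ℝ ℝ) x := h
  rw [h'.fderiv]
  simp [mul_comm]

lemma py_comp_fst (g : ℝ → ℝ) (hg : Differentiable ℝ g) (x : ℝ × ℝ) :
    py (fun x' : ℝ × ℝ => g x'.1) x = 0 := by
  simp [py, fderiv_comp_fst g hg]

lemma pz_comp_fst (g : ℝ → ℝ) (hg : Differentiable ℝ g) (x : ℝ × ℝ) :
    pz (fun x' : ℝ × ℝ => g x'.1) x = deriv g x.1 := by
  simp [pz, fderiv_comp_fst g hg]

lemma py_const (c : ℝ) (x : ℝ × ℝ) : py (fun _ : ℝ × ℝ => c) x = 0 := by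
  simp [py]

/-- if `P = P(z)` is smooth, never zero and solves `z P' = ρP + εP³`,
then the slopes `P, -P, 0` form a geodesic 3-web of `z y'' = ρ y' + ε(y')³`
and the hexagonality (vanishing Blaschke curvature) condition holds. -/
theorem statement13 (ε ρ : ℝ) (hε : ε = 1 ∨ ε = -1)
    (hρ1 : ρ ≠ 1) (hρ2 : ρ ≠ -(1 / 2))
    (P : ℝ → ℝ) (hP : ContDiff ℝ (⊤ : ℕ∞) P) (hPne : ∀ z, P z ≠ 0)
    (hode : ∀ z, z * deriv P z = ρ * P z + ε * (P z) ^ 3) :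
    IsGeoSlope ε ρ (fun x => P x.1) ∧
    IsGeoSlope ε ρ (fun x => -P x.1) ∧
    IsGeoSlope ε ρ (fun _ => (0 : ℝ)) ∧
    (∀ x : ℝ × ℝ,
      py (py (fun x' => P x'.1)) x + py (py (fun x' => -P x'.1)) x
        + py (py (fun _ => (0 : ℝ))) x
      - (3 * ε / x.1) * (P x.1 * py (fun x' => P x'.1) x
          + (-P x.1) * py (fun x' => -P x'.1) x
          + 0 * py (fun _ => (0 : ℝ)) x)
      + (1 / x.1 ^ 2) * ((P x.1) ^ 3 + (-P x.1) ^ 3 + 0 ^ 3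
          + ε * (ρ - 1) * (P x.1 + -P x.1 + 0)) = 0) := by
  have hPd : Differentiable ℝ P := hP.differentiable (by simp)
  have hPd' : Differentiable ℝ (fun z => -P z) := hPd.neg
  have hderivneg : ∀ z, deriv (fun z => -P z) z = -deriv P z := fun z => deriv.fun_neg
  have hpyP : ∀ x, py (fun x' : ℝ × ℝ => P x'.1) x = 0 := py_comp_fst P hPd
  have hpyN : ∀ x, py (fun x' : ℝ × ℝ => -P x'.1) x = 0 := py_comp_fst _ hPd'
  refine ⟨?_, ?_, ?_, ?_⟩
  · intro x
    rw [pz_comp_fst P hPd, hpyP]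
    simpa using hode x.1
  · intro x
    rw [pz_comp_fst _ hPd', hpyN, hderivneg]
    have := hode x.1
    ring_nf
    ring_nf at this
    linarith
  · intro x
    simp [pz, py]
  · intro x
    have h1 : py (py (fun x' : ℝ × ℝ => P x'.1)) x = 0 := by
      have : py (fun x' : ℝ × ℝ => P x'.1) = fun _ => (0 : ℝ) := funext hpyP
      rw [this]; exact py_const 0 x
    have h2 : py (py (fun x' : ℝ × ℝ => -P x'.1)) x = 0 := by
      have : py (fun x' : ℝ × ℝ => -P x'.1) = fun _ => (0 : ℝ) := funext hpyN
      rw [this]; exact py_const 0 x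
    have h3 : py (py (fun _ : ℝ × ℝ => (0:ℝ))) x = 0 := by
      have : py (fun _ : ℝ × ℝ => (0:ℝ)) = fun _ => (0 : ℝ) := funext (py_const 0)
      rw [this]; exact py_const 0 x
    rw [h1, h2, h3, hpyP, hpyN, py_const]
    ring
end

section
/- Let e, j, f be smooth functions of s satisfying the ODE system e' = (κ+1)e(f − κj)/δ, j' = j(−jκ² + 2(f−j)κ + e)/δ, f' = (−2fjκ² + (2f² − 3fj + je)κ + e(f+j))/(2δ), where δ = −jκ³ + (f−2j)κ² + (2e−f)κ + e ≠ 0 and κ is a constant. Then E(u,v) = e^u e(v−κu), G(u,v) = e^u j(v−κu), F(u,v) = e^u f(v−κu) satisfy the system 2EF_u − FE_u − EE_v = 0, 2GF_v − FG_v − GG_u = 0, GE_u + EG_v − 2F(F_u+F_v) + (3F−2G)E_v + (3F−2E)G_u = 0. -/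
lemma fd_aux (κ : ℝ) (g : ℝ → ℝ) (hg : ContDiff ℝ (⊤ : ℕ∞) g) (x : ℝ × ℝ) (w : ℝ × ℝ) :
    fderiv ℝ (fun p : ℝ × ℝ => Real.exp p.1 * g (p.2 - κ * p.1)) x w
      = Real.exp x.1 * g (x.2 - κ * x.1) * w.1
        + Real.exp x.1 * deriv g (x.2 - κ * x.1) * (w.2 - κ * w.1) := by
  have h1 : HasFDerivAt (fun p : ℝ × ℝ => Real.exp p.1)
      (Real.exp x.1 • ContinuousLinearMap.fst ℝ ℝ ℝ) x :=
    (Real.hasDerivAt_exp x.1).comp_hasFDerivAt x hasFDerivAt_fst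
  have hL : HasFDerivAt (fun p : ℝ × ℝ => p.2 - κ * p.1)
      (ContinuousLinearMap.snd ℝ ℝ ℝ - κ • ContinuousLinearMap.fst ℝ ℝ ℝ) x :=
    hasFDerivAt_snd.sub (hasFDerivAt_fst.const_mul κ)
  have h2 : HasFDerivAt (fun p : ℝ × ℝ => g (p.2 - κ * p.1))
      (deriv g (x.2 - κ * x.1) • (ContinuousLinearMap.snd ℝ ℝ ℝ - κ • ContinuousLinearMap.fst ℝ ℝ ℝ)) x :=
    ((hg.differentiable (by simp) (x.2 - κ * x.1)).hasDerivAt).comp_hasFDerivAt x hL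
  have h : HasFDerivAt (fun p : ℝ × ℝ => Real.exp p.1 * g (p.2 - κ * p.1)) _ x := h1.mul h2
  rw [h.fderiv]
  simp [ContinuousLinearMap.smul_apply, smul_eq_mul]
  ring

/-- if `e, j, f` solve the reduced ODE system with
`δ = -jκ³ + (f-2j)κ² + (2e-f)κ + e ≠ 0`, then
`E = e^u e(v-κu)`, `F = e^u f(v-κu)`, `G = e^u j(v-κu)` solve the hexagonal-web
quasilinear system. -/
theorem statement18 (κ : ℝ) (ee jj ff : ℝ → ℝ)
    (hee : ContDiff ℝ (⊤ : ℕ∞) ee) (hjj : ContDiff ℝ (⊤ : ℕ∞) jj) (hff : ContDiff ℝ (⊤ : ℕ∞) ff)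
    (δ : ℝ → ℝ)
    (hδdef : δ = fun s => -jj s * κ ^ 3 + (ff s - 2 * jj s) * κ ^ 2
      + (2 * ee s - ff s) * κ + ee s)
    (hδne : ∀ s, δ s ≠ 0)
    (hode : ∀ s,
      deriv ee s = (κ + 1) * ee s * (ff s - κ * jj s) / δ s ∧
      deriv jj s = jj s * (-jj s * κ ^ 2 + 2 * (ff s - jj s) * κ + ee s) / δ s ∧
      deriv ff s = (-2 * ff s * jj s * κ ^ 2
        + (2 * ff s ^ 2 - 3 * ff s * jj s + jj s * ee s) * κ
        + ee s * (ff s + jj s)) / (2 * δ s)) :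
    IsSol (fun x => Real.exp x.1 * ee (x.2 - κ * x.1))
      (fun x => Real.exp x.1 * ff (x.2 - κ * x.1))
      (fun x => Real.exp x.1 * jj (x.2 - κ * x.1)) Set.univ := by
  intro x _
  obtain ⟨h1, h2, h3⟩ := hode (x.2 - κ * x.1)
  have hδ := hδne (x.2 - κ * x.1)
  have hδeq : δ (x.2 - κ * x.1) = -jj (x.2 - κ * x.1) * κ ^ 3
      + (ff (x.2 - κ * x.1) - 2 * jj (x.2 - κ * x.1)) * κ ^ 2
      + (2 * ee (x.2 - κ * x.1) - ff (x.2 - κ * x.1)) * κ + ee (x.2 - κ * x.1) := by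
    rw [hδdef]
  simp only [pu, pv, fd_aux κ ee hee, fd_aux κ jj hjj, fd_aux κ ff hff]
  refine ⟨?_, ?_, ?_⟩ <;>
  · simp only [h1, h2, h3]
    field_simp
    rw [hδeq]
    ring
end
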